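/- In S̄ = S/(m_{(a,b)} : a ≠ b), for every k > 0: m̄_{(k,k)} = (−1)^k · m̄_{(k,0)(0,1)^k}. -/

import Mathlib

/-! For `k > 0` a monomial of `m_{(k,j)} · m_{(0,1)^r}` factors in at most one way, since its
`x`-part pins down the first factor. The `r` new `y`'s either avoid the row carrying `xᵢᵏ` or one
of them lands on it, so for `r > 0`
`m_{(k,j)} m_{(0,1)^r} = m_{(k,j)(0,1)^r} + m_{(k,j+1)(0,1)^(r-1)}`.
For `j < k` the left side lies in the ideal, hence
`m̄_{(k,j+1)(0,1)^(k-j-1)} = -m̄_{(k,j)(0,1)^(k-j)}`, and `k` such steps starting from `j = 0`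
give the claim. -/

/-- The monomial MacMahon symmetric function `m_Λ` attached to a bipartite partition
`Λ` (a multiset of vectors in `ℕ×ℕ`), as a formal power series in two families of
variables `xᵢ = X (i,0)`, `yᵢ = X (i,1)`: the sum, with coefficients `0` or `1`, of all
monomials whose multiset of exponent pairs equals `Λ`. -/
noncomputable def mm (Λ : Multiset (ℕ × ℕ)) : MvPowerSeries (ℕ × Fin 2) ℂ :=
  fun d => if (d.support.image Prod.fst).val.map
      (fun i => (d (i, 0), d (i, 1))) = Λ then 1 else 0

/-- The ideal of `S` generated by the `m_{(a,b)}` with `a ≠ b`, as a `ℂ`-submodule: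
the span of the products `m_{(a,b)} · m_Λ`. -/
noncomputable def Jbar : Submodule ℂ (MvPowerSeries (ℕ × Fin 2) ℂ) :=
  Submodule.span ℂ {x | ∃ (a b : ℕ) (Λ : Multiset (ℕ × ℕ)),
    a ≠ b ∧ (0, 0) ∉ Λ ∧ x = mm {(a, b)} * mm Λ}

namespace MacMahon

open Finset MvPowerSeries
open Multiset (replicate)

variable {d e : (ℕ × Fin 2) →₀ ℕ} {i i' a b k j r : ℕ} {T T' : Finset ℕ}

def expPair (d : (ℕ × Fin 2) →₀ ℕ) (i : ℕ) : ℕ × ℕ := (d (i, 0), d (i, 1))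

def rows (d : (ℕ × Fin 2) →₀ ℕ) : Finset ℕ := d.support.image Prod.fst

def shape (d : (ℕ × Fin 2) →₀ ℕ) : Multiset (ℕ × ℕ) := (rows d).val.map (expPair d)

lemma coeff_mm (Λ : Multiset (ℕ × ℕ)) (d : (ℕ × Fin 2) →₀ ℕ) :
    coeff d (mm Λ) = if shape d = Λ then 1 else 0 := rfl

lemma mem_rows : i ∈ rows d ↔ expPair d i ≠ 0 := by
  simp [rows, expPair, Prod.ext_iff, Fin.exists_fin_two]; tauto

lemma rows_eq (h : ∀ i, i ∈ T ↔ expPair d i ≠ 0) : rows d = T :=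
  Finset.ext fun i => mem_rows.trans (h i).symm

lemma ext_expPair (h : ∀ i, expPair d i = expPair e i) : d = e := by
  ext ⟨i, c⟩
  fin_cases c
  · exact congrArg Prod.fst (h i)
  · exact congrArg Prod.snd (h i)

lemma expPair_add : expPair (d + e) i = expPair d i + expPair e i := rfl

noncomputable def expXY (i a b : ℕ) : (ℕ × Fin 2) →₀ ℕ :=
  Finsupp.single (i, 0) a + Finsupp.single (i, 1) b

noncomputable def expY (T : Finset ℕ) : (ℕ × Fin 2) →₀ ℕ :=
  ∑ i ∈ T, Finsupp.single (i, 1) 1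

lemma expPair_expXY : expPair (expXY i a b) i' = if i' = i then (a, b) else 0 := by
  by_cases h : i' = i <;> simp [expPair, expXY, h]

lemma expPair_expY : expPair (expY T) i = if i ∈ T then (0, 1) else 0 := by
  by_cases h : i ∈ T <;> simp [expPair, expY, Finsupp.finsetSum_apply, Finsupp.single_apply, h]


lemma shape_expXY_add_expY (hab : (a, b) ≠ 0) (hi : i ∉ T) :
    shape (expXY i a b + expY T) = (a, b) ::ₘ replicate #T (0, 1) := by
  have hrows : rows (expXY i a b + expY T) = insert i T := rows_eq fun i' => by
    by_cases h : i' = i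
    · subst h; simpa [expPair_add, expPair_expXY, expPair_expY, hi] using hab
    · by_cases h' : i' ∈ T <;> simp [expPair_add, expPair_expXY, expPair_expY, h, h']
  rw [shape, hrows, insert_val_of_notMem hi, Multiset.map_cons, ← card_val,
    ← Multiset.map_const', expPair_add, expPair_expXY, expPair_expY, if_pos rfl, if_neg hi,
    add_zero]
  congr 1
  refine Multiset.map_congr rfl fun i' hi' => ?_
  rw [expPair_add, expPair_expXY, expPair_expY, if_neg (ne_of_mem_of_not_mem hi' hi),
    if_pos (mem_def.2 hi'), zero_add]

lemma shape_expY : shape (expY T) = replicate #T (0, 1) := by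
  have hrows : rows (expY T) = T := rows_eq fun i => by
    by_cases h : i ∈ T <;> simp [expPair_expY, h]
  rw [shape, hrows, ← card_val, ← Multiset.map_const']
  exact Multiset.map_congr rfl fun i hi => by rw [expPair_expY, if_pos (mem_def.2 hi)]

lemma exists_eq_expXY_add_expY_of_shape_eq
    (h : shape d = (a, b) ::ₘ replicate r (0, 1)) :
    ∃ i T, i ∉ T ∧ #T = r ∧ d = expXY i a b + expY T := by
  have hab : (a, b) ∈ shape d := h ▸ Multiset.mem_cons_self _ _
  obtain ⟨i, hi, hdi⟩ := Multiset.mem_map.1 hab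
  have hrest : ((rows d).erase i).val.map (expPair d) = replicate r (0, 1) := by
    rwa [shape, ← Multiset.cons_erase hi, Multiset.map_cons, hdi, Multiset.cons_inj_right,
      ← erase_val] at h
  refine ⟨i, (rows d).erase i, notMem_erase _ _, by
    rw [← Multiset.card_replicate r (0, 1), ← hrest, Multiset.card_map]; rfl,
    ext_expPair fun i' => ?_⟩
  rw [expPair_add, expPair_expXY, expPair_expY]
  by_cases h₁ : i' = i
  · simp [h₁, hdi]
  by_cases h₂ : i' ∈ rows d
  · have hmem : i' ∈ (rows d).erase i := mem_erase.2 ⟨h₁, h₂⟩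
    rw [if_neg h₁, if_pos hmem, zero_add]
    exact Multiset.eq_of_mem_replicate (hrest ▸ Multiset.mem_map_of_mem _ hmem)
  · simpa [h₁, h₂] using mem_rows.not.1 h₂

lemma exists_eq_expY_of_shape_eq (h : shape d = replicate r (0, 1)) :
    ∃ T, #T = r ∧ d = expY T := by
  refine ⟨rows d, by rw [← Multiset.card_replicate r (0, 1), ← h, shape, Multiset.card_map]; rfl,
    ext_expPair fun i => ?_⟩
  rw [expPair_expY]
  split_ifs with hi
  · have hmem : expPair d i ∈ shape d := Multiset.mem_map_of_mem _ hi
    exact Multiset.eq_of_mem_replicate (h ▸ hmem)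
  · simpa using mem_rows.not.1 hi

lemma shape_expXY (hab : (a, b) ≠ 0) : shape (expXY i a b) = {(a, b)} := by
  simpa [expY] using shape_expXY_add_expY (T := ∅) hab (notMem_empty i)

lemma exists_eq_expXY_of_shape_eq (h : shape d = {(a, b)}) : ∃ i, d = expXY i a b := by
  obtain ⟨i, T, -, hT, rfl⟩ := exists_eq_expXY_add_expY_of_shape_eq (r := 0) (by simpa using h)
  rw [card_eq_zero] at hT
  exact ⟨i, by simp [hT, expY]⟩

lemma expXY_add_expY_insert (hi : i ∉ T) :
    expXY i a b + expY (insert i T) = expXY i a (b + 1) + expY T := by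
  rw [expY, sum_insert hi, ← expY, ← add_assoc]
  congr 1
  rw [expXY, expXY, add_assoc, Finsupp.single_add]

lemma expY_injective : Function.Injective expY := fun T T' h => Finset.ext fun i => by
  have := congrArg (fun d => (expPair d i).2) h
  by_cases hT : i ∈ T <;> by_cases hT' : i ∈ T' <;> simp [expPair_expY, hT, hT'] at this ⊢

lemma expXY_add_expY_inj (ha : a ≠ 0) (h : expXY i a b + expY T = expXY i' a b + expY T') :
    i = i' ∧ T = T' := by
  obtain rfl : i = i' := by
    by_contra hne
    have := congrArg (fun d => (expPair d i).1) h
    simp [expPair_add, expPair_expXY, expPair_expY, hne, apply_ite Prod.fst] at this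
    exact ha this
  exact ⟨rfl, expY_injective (add_left_cancel h)⟩

lemma coeff_mm_mul_mm (Λ₁ Λ₂ : Multiset (ℕ × ℕ)) (d : (ℕ × Fin 2) →₀ ℕ) :
    coeff d (mm Λ₁ * mm Λ₂) =
      #{p ∈ antidiagonal d | shape p.1 = Λ₁ ∧ shape p.2 = Λ₂} := by
  rw [coeff_mul, card_filter, Nat.cast_sum]
  refine sum_congr rfl fun p _ => ?_
  simp only [coeff_mm]
  split_ifs <;> simp_all

noncomputable def factorizations (k j r : ℕ) (d : (ℕ × Fin 2) →₀ ℕ) :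
    Finset (((ℕ × Fin 2) →₀ ℕ) × ((ℕ × Fin 2) →₀ ℕ)) :=
  {p ∈ antidiagonal d | shape p.1 = {(k, j)} ∧ shape p.2 = replicate r (0, 1)}

lemma card_factorizations_le_one (hk : k ≠ 0) : #(factorizations k j r d) ≤ 1 := by
  refine card_le_one.2 fun ⟨p₁, p₂⟩ hp ⟨q₁, q₂⟩ hq => ?_
  simp only [factorizations, mem_filter, HasAntidiagonal.mem_antidiagonal] at hp hq
  obtain ⟨hpd, hp₁, hp₂⟩ := hp
  obtain ⟨hqd, hq₁, hq₂⟩ := hq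
  obtain ⟨i, rfl⟩ := exists_eq_expXY_of_shape_eq hp₁
  obtain ⟨i', rfl⟩ := exists_eq_expXY_of_shape_eq hq₁
  obtain ⟨T, -, rfl⟩ := exists_eq_expY_of_shape_eq hp₂
  obtain ⟨T', -, rfl⟩ := exists_eq_expY_of_shape_eq hq₂
  obtain ⟨rfl, rfl⟩ := expXY_add_expY_inj hk (hpd.trans hqd.symm)
  rfl

lemma factorizations_nonempty_iff (hk : k ≠ 0) (hr : r ≠ 0) :
    (factorizations k j r d).Nonempty ↔ shape d = (k, j) ::ₘ replicate r (0, 1) ∨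
        shape d = (k, j + 1) ::ₘ replicate (r - 1) (0, 1) := by
  have hkj : ∀ j, ((k, j) : ℕ × ℕ) ≠ 0 := by simp [hk]
  constructor
  · rintro ⟨⟨p₁, p₂⟩, hp⟩
    simp only [factorizations, mem_filter, HasAntidiagonal.mem_antidiagonal] at hp
    obtain ⟨rfl, hp₁, hp₂⟩ := hp
    obtain ⟨i, rfl⟩ := exists_eq_expXY_of_shape_eq hp₁
    obtain ⟨T, rfl, rfl⟩ := exists_eq_expY_of_shape_eq hp₂
    by_cases hi : i ∈ T
    · right
      conv_lhs => rw [← insert_erase hi]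
      rw [expXY_add_expY_insert (notMem_erase i T), shape_expXY_add_expY (hkj _) (notMem_erase i T),
        card_erase_of_mem hi]
    · exact .inl (shape_expXY_add_expY (hkj j) hi)
  · rintro (h | h)
    · obtain ⟨i, T, -, rfl, rfl⟩ := exists_eq_expXY_add_expY_of_shape_eq h
      exact ⟨(expXY i k j, expY T), by simp [factorizations, shape_expXY (hkj j), shape_expY]⟩
    · obtain ⟨i, T, hi, hT, rfl⟩ := exists_eq_expXY_add_expY_of_shape_eq h
      refine ⟨(expXY i k j, expY (insert i T)), ?_⟩
      simp [factorizations, shape_expXY (hkj j), shape_expY, expXY_add_expY_insert hi,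
        card_insert_of_notMem hi, hT]
      rw [← Multiset.replicate_succ, Nat.sub_one_add_one hr]

lemma cons_replicate_ne (hk : k ≠ 0) (r s : ℕ) :
    (k, j) ::ₘ replicate r (0, 1) ≠ (k, j + 1) ::ₘ replicate s (0, 1) := by
  intro h
  have := h ▸ Multiset.mem_cons_self (k, j) (replicate r (0, 1))
  simp [Multiset.mem_replicate, hk] at this

lemma mm_singleton_mul_mm_replicate (hk : k ≠ 0) (hr : r ≠ 0) :
    mm {(k, j)} * mm (replicate r (0, 1)) =
      mm ((k, j) ::ₘ replicate r (0, 1)) +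
        mm ((k, j + 1) ::ₘ replicate (r - 1) (0, 1)) := by
  ext d
  rw [coeff_mm_mul_mm, ← factorizations, map_add, coeff_mm, coeff_mm]
  have hne := cons_replicate_ne (j := j) hk r (r - 1)
  have hcard := card_factorizations_le_one (d := d) (j := j) (r := r) hk
  have hiff := factorizations_nonempty_iff (d := d) (j := j) hk hr
  rw [← card_pos] at hiff
  by_cases hA : shape d = (k, j) ::ₘ replicate r (0, 1)
  · have : #(factorizations k j r d) = 1 := by have := hiff.2 (.inl hA); omega
    simp [this, hA, hne]
  by_cases hB : shape d = (k, j + 1) ::ₘ replicate (r - 1) (0, 1)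
  · have : #(factorizations k j r d) = 1 := by have := hiff.2 (.inr hB); omega
    simp [this, hB, hne.symm]
  · have : #(factorizations k j r d) = 0 := by
      by_contra h0
      exact not_or.2 ⟨hA, hB⟩ (hiff.1 (by omega))
    simp [this, hA, hB]

lemma mm_singleton_mul_mem_Jbar {Λ : Multiset (ℕ × ℕ)} (hab : a ≠ b) (hΛ : (0, 0) ∉ Λ) :
    mm {(a, b)} * mm Λ ∈ Jbar :=
  Submodule.subset_span ⟨a, b, Λ, hab, hΛ, rfl⟩

lemma mm_cons_replicate_sub_mem_Jbar (hj : j ≤ k) :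
    mm ((k, j) ::ₘ replicate (k - j) (0, 1)) -
      (-1 : ℂ) ^ j • mm ((k, 0) ::ₘ replicate k (0, 1)) ∈ Jbar := by
  induction j with
  | zero => simp
  | succ j ih =>
    have hgen : mm {(k, j)} * mm (replicate (k - j) (0, 1)) ∈ Jbar :=
      mm_singleton_mul_mem_Jbar (by omega) (by simp [Multiset.mem_replicate])
    rw [mm_singleton_mul_mm_replicate (by omega) (by omega), Nat.sub_sub] at hgen
    convert Submodule.sub_mem _ hgen (ih (by omega)) using 1
    rw [pow_succ]
    module

end MacMahon

theorem stmt13_general (k : ℕ) :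
    mm {((k : ℕ), (k : ℕ))} -
      ((-1 : ℂ) ^ k) • mm ((k, 0) ::ₘ Multiset.replicate k ((0 : ℕ), (1 : ℕ))) ∈ Jbar := by
  simpa using MacMahon.mm_cons_replicate_sub_mem_Jbar (le_refl k)

/-- In `S̄ = S/(m_{(a,b)} : a ≠ b)`: `m̄_{(k,k)} = (−1)^k m̄_{(k,0)(0,1)^k}` for `k > 0`. -/
theorem stmt13 (k : ℕ) (hk : 0 < k) :
    mm {((k : ℕ), (k : ℕ))} -
      ((-1 : ℂ) ^ k) • mm ((k, 0) ::ₘ Multiset.replicate k ((0 : ℕ), (1 : ℕ))) ∈ Jbar :=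
  stmt13_general k
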